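/- arXiv:1007.4154 — 2 statements merged into one kernel-verified Lean document; each statement's English description precedes it below -/
import Mathlib

section
/- Let β = (1/12)·ln(1/(1−e^{−2})) (the root of ln(1−e^{−12β}) = −2), let 0 < α < β, and for even n let p = p(n) = (β−α)/ln(n). Sample a random seed set S on the toroidal mesh of size n from the product Bernoulli(p) measure, and define the derived seed set S' on the grid (ZMod (n/2)) × (ZMod (n/2)) by: (i,j) ∈ S' iff at least one of the four vertices (2i,2j), (2i+1,2j), (2i,2j+1), (2i+1,2j+1) belongs to S. Let l = ⌊ln n⌋. Then the probability that the derived grid contains a bad rectangle with dimensions 3l × l or l × 3l tends to 0 as n → ∞ (over even n). -/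
open MeasureTheory Filter

/-- The toroidal mesh of size `n`: vertices `(ZMod n) × (ZMod n)`, with `(i,j)`
adjacent to `(i±1,j)` and `(i,j±1)`. -/
def torus (n : ℕ) : SimpleGraph (ZMod n × ZMod n) :=
  SimpleGraph.fromRel (fun v w => w = (v.1 + 1, v.2) ∨ w = (v.1, v.2 + 1))

/-- One step of the majority coloring process with threshold 2: a vertex turns black
if it has at least two black neighbors; black vertices stay black. -/
def colorStep {V : Type*} (G : SimpleGraph V) (S : Set V) : Set V :=
  S ∪ {v | ∃ u w, u ≠ w ∧ G.Adj v u ∧ G.Adj v w ∧ u ∈ S ∧ w ∈ S}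

/-- `S` is a dynamo if every vertex eventually turns black. -/
def IsDynamo {V : Type*} (G : SimpleGraph V) (S : Set V) : Prop :=
  ∀ v, ∃ t, v ∈ (colorStep G)^[t] S

/-- The Bernoulli(p) measure on `Bool`. -/
noncomputable def bernoulliMeasure (p : ℝ) : Measure Bool :=
  ENNReal.ofReal p • Measure.dirac true + ENNReal.ofReal (1 - p) • Measure.dirac false

instance (p : ℝ) : IsFiniteMeasure (bernoulliMeasure p) := by
  constructor
  simp [bernoulliMeasure, ENNReal.add_lt_top, ENNReal.ofReal_lt_top]

/-- The product Bernoulli(p) measure on subsets (indicator functions) of `V`. -/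
noncomputable def seedMeasure (V : Type*) [Fintype V] (p : ℝ) : Measure (V → Bool) :=
  Measure.pi fun _ => bernoulliMeasure p

/-- The derived seed set on the grid `(ZMod k) × (ZMod k)` obtained from a seed
configuration `f` on the toroidal mesh of size `2k`: a vertex `(i,j)` belongs to it
iff one of the four corresponding vertices `(2i+a, 2j+b)`, `a,b ∈ {0,1}`, is a seed. -/
def derivedSeed (k : ℕ) (f : ZMod (2 * k) × ZMod (2 * k) → Bool) :
    ZMod k × ZMod k → Prop :=
  fun v => ∃ a b : ℕ, a ≤ 1 ∧ b ≤ 1 ∧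
    f (((2 * v.1.val + a : ℕ) : ZMod (2 * k)), ((2 * v.2.val + b : ℕ) : ZMod (2 * k))) = true

/-- Every one of the `h` rows of the rectangle at `(x,y)` of width `w` and height `h`
contains an element of `S`. -/
def rowsCovered (k : ℕ) (S : ZMod k × ZMod k → Prop) (x y : ZMod k) (w h : ℕ) : Prop :=
  ∀ j : ℕ, j < h → ∃ i : ℕ, i < w ∧ S (x + (i : ZMod k), y + (j : ZMod k))

/-- Every one of the `w` columns of the rectangle at `(x,y)` of width `w` and height `h`
contains an element of `S`. -/
def colsCovered (k : ℕ) (S : ZMod k × ZMod k → Prop) (x y : ZMod k) (w h : ℕ) : Prop :=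
  ∀ i : ℕ, i < w → ∃ j : ℕ, j < h ∧ S (x + (i : ZMod k), y + (j : ZMod k))

/-!
Row `j` of a bad `3l × l` rectangle is hit by the derived seed set iff one of the `12l` torus
vertices lying over it is a seed. Over distinct rows these vertex sets are disjoint (as
`l ≤ n/2`), so by independence the rectangle is bad with probability at most `q ^ l`, where
`q = 1 - (1-p)^(12l)`. As `l p ≤ β - α` and `p → 0`, eventually `q ≤ r` for a fixed
`r < 1 - e^(-12β) = e^(-2)`, and the union bound over the `(n/2)²` positions and two
orientations is at most `2 n² r^⌊ln n⌋ ≤ (2/r) n^(2 + ln r) → 0`.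
-/

open Finset

section Independence

open ProbabilityTheory

variable {V Ω : Type*} [Fintype V] [MeasurableSpace Ω] [Finite Ω] [MeasurableSingletonClass Ω]
  (μ : V → Measure Ω) [∀ v, IsProbabilityMeasure (μ v)]

lemma measure_pi_inter_eq_mul {S T : Finset V} (hST : Disjoint S T) {s t : Set (V → Ω)}
    (hs : DependsOn (· ∈ s) (S : Set V)) (ht : DependsOn (· ∈ t) (T : Set V)) :
    Measure.pi μ (s ∩ t) = Measure.pi μ s * Measure.pi μ t := by
  obtain ⟨g, hg⟩ := dependsOn_iff_exists_comp.mp hs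
  obtain ⟨h, hh⟩ := dependsOn_iff_exists_comp.mp ht
  have hind : iIndepFun (fun v (f : V → Ω) => f v) (Measure.pi μ) :=
    iIndepFun_pi (X := fun _ => id) fun _ => aemeasurable_id
  rw [show s = (S : Set V).domRestrict ⁻¹' {x | g x} from
      Set.ext fun f => iff_of_eq (congrFun hg f),
    show t = (T : Set V).domRestrict ⁻¹' {x | h x} from
      Set.ext fun f => iff_of_eq (congrFun hh f)]
  exact (hind.indepFun_finset S T hST measurable_pi_apply).measure_inter_preimage_eq_mul
    _ _ (Set.toFinite _).measurableSet (Set.toFinite _).measurableSet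

lemma measure_pi_biInter_eq_prod {ι : Type*} (J : Finset ι)
    {A : ι → Finset V} (hA : (J : Set ι).PairwiseDisjoint A) {s : ι → Set (V → Ω)}
    (hs : ∀ j ∈ J, DependsOn (· ∈ s j) (A j : Set V)) :
    Measure.pi μ (⋂ j ∈ J, s j) = ∏ j ∈ J, Measure.pi μ (s j) := by
  classical
  induction J using Finset.induction_on with
  | empty => simp
  | insert a J ha ih =>
    have hdisj : Disjoint (A a) (J.biUnion A) := (disjoint_biUnion_right _ _ _).mpr fun j hj =>
      hA (by simp) (by simp [hj]) (ne_of_mem_of_not_mem hj ha).symm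
    have hJ : DependsOn (· ∈ ⋂ j ∈ J, s j) (J.biUnion A : Set V) := fun f g hfg => by
      simp only [Set.mem_iInter]
      exact propext <| forall₂_congr fun j hj => iff_of_eq <|
        hs j (mem_insert_of_mem hj) fun v hv => hfg v (by simpa using ⟨j, hj, hv⟩)
    rw [Finset.set_biInter_insert, Finset.prod_insert ha,
      measure_pi_inter_eq_mul μ hdisj (hs a (mem_insert_self a J)) hJ,
      ih (hA.subset (by simp)) fun j hj => hs j (mem_insert_of_mem hj)]

end Independence

section Bernoulli

variable {p : ℝ}

lemma isProbabilityMeasure_bernoulliMeasure (h0 : 0 ≤ p) (h1 : p ≤ 1) :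
    IsProbabilityMeasure (bernoulliMeasure p) :=
  ⟨by simp [bernoulliMeasure, ← ENNReal.ofReal_add h0 (sub_nonneg.mpr h1)]⟩

variable {V : Type*} [Fintype V]

lemma seedMeasure_forall_false (h0 : 0 ≤ p) (h1 : p ≤ 1) (A : Finset V) :
    seedMeasure V p {f | ∀ v ∈ A, f v = false} = ENNReal.ofReal (1 - p) ^ #A := by
  have := isProbabilityMeasure_bernoulliMeasure h0 h1
  have hbox : {f : V → Bool | ∀ v ∈ A, f v = false} = (A : Set V).pi fun _ => {false} := by
    ext f; simp [Set.mem_pi]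
  rw [hbox, seedMeasure, Measure.pi_pi_finset]
  simp [bernoulliMeasure]

lemma seedMeasure_exists_true (h0 : 0 ≤ p) (h1 : p ≤ 1) (A : Finset V) :
    seedMeasure V p {f | ∃ v ∈ A, f v = true} = ENNReal.ofReal (1 - (1 - p) ^ #A) := by
  have := isProbabilityMeasure_bernoulliMeasure h0 h1
  have hcompl : {f : V → Bool | ∃ v ∈ A, f v = true} = {f | ∀ v ∈ A, f v = false}ᶜ := by
    ext f; simp
  rw [hcompl, seedMeasure, prob_compl_eq_one_sub (Set.toFinite _).measurableSet, ← seedMeasure,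
    seedMeasure_forall_false h0 h1, ← ENNReal.ofReal_pow (sub_nonneg.mpr h1),
    ← ENNReal.ofReal_one, ← ENNReal.ofReal_sub _ (by positivity)]

lemma seedMeasure_forall_exists_true_le (h0 : 0 ≤ p) (h1 : p ≤ 1) {ι : Type*} (J : Finset ι)
    {A : ι → Finset V} (hA : (J : Set ι).PairwiseDisjoint A) {c : ℕ}
    (hc : ∀ j ∈ J, #(A j) ≤ c) :
    seedMeasure V p {f | ∀ j ∈ J, ∃ v ∈ A j, f v = true} ≤
      ENNReal.ofReal ((1 - (1 - p) ^ c) ^ #J) := by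
  have := isProbabilityMeasure_bernoulliMeasure h0 h1
  have hinter : {f : V → Bool | ∀ j ∈ J, ∃ v ∈ A j, f v = true} =
      ⋂ j ∈ J, {f | ∃ v ∈ A j, f v = true} := by
    ext f; simp
  have hdep : ∀ j ∈ J,
      DependsOn (· ∈ {f : V → Bool | ∃ v ∈ A j, f v = true}) (A j : Set V) :=
    fun j _ f g hfg => by
      simp only [Set.mem_ofPred_eq]
      exact propext <| exists_congr fun v => and_congr_right fun hv => by rw [hfg v hv]
  have hq : 0 ≤ 1 - (1 - p) ^ c := sub_nonneg.mpr (pow_le_one₀ (by linarith) (by linarith))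
  rw [hinter, seedMeasure, measure_pi_biInter_eq_prod _ J hA hdep, ENNReal.ofReal_pow hq,
    ← prod_const]
  refine prod_le_prod' fun j hj => (seedMeasure_exists_true h0 h1 (A j)).le.trans ?_
  exact ENNReal.ofReal_le_ofReal <| sub_le_sub_left
    (pow_le_pow_of_le_one (by linarith) (by linarith) (hc j hj)) 1

end Bernoulli

section TorusBlocks

variable {K : ℕ}

def torusBlock (K : ℕ) (v : ZMod K × ZMod K) : Finset (ZMod (2 * K) × ZMod (2 * K)) :=
  (range 2 ×ˢ range 2).image fun ab =>
    (((2 * v.1.val + ab.1 : ℕ) : ZMod (2 * K)), ((2 * v.2.val + ab.2 : ℕ) : ZMod (2 * K)))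

lemma derivedSeed_iff_exists_mem_torusBlock (f : ZMod (2 * K) × ZMod (2 * K) → Bool)
    (v : ZMod K × ZMod K) : derivedSeed K f v ↔ ∃ u ∈ torusBlock K v, f u = true := by
  simp only [derivedSeed, torusBlock, exists_mem_image, mem_product, mem_range, Prod.exists]
  constructor
  · rintro ⟨a, b, ha, hb, hf⟩; exact ⟨a, b, ⟨by omega, by omega⟩, hf⟩
  · rintro ⟨a, b, ⟨ha, hb⟩, hf⟩; exact ⟨a, b, by omega, by omega, hf⟩

lemma card_torusBlock_le (v : ZMod K × ZMod K) : #(torusBlock K v) ≤ 4 :=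
  card_image_le.trans (by simp)

lemma eq_of_natCast_two_mul_add_eq [NeZero K] {a a' b b' : ℕ} (ha : a < K) (ha' : a' < K)
    (hb : b < 2) (hb' : b' < 2)
    (h : ((2 * a + b : ℕ) : ZMod (2 * K)) = ((2 * a' + b' : ℕ) : ZMod (2 * K))) : a = a' := by
  rw [ZMod.natCast_eq_natCast_iff', Nat.mod_eq_of_lt (by omega), Nat.mod_eq_of_lt (by omega)] at h
  omega

lemma pairwiseDisjoint_torusBlock [NeZero K] :
    (Set.univ : Set (ZMod K × ZMod K)).PairwiseDisjoint (torusBlock K) := by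
  intro v _ w _ hvw
  refine disjoint_left.mpr fun u hv hw => hvw ?_
  simp only [torusBlock, mem_image, mem_product, mem_range] at hv hw
  obtain ⟨⟨a, b⟩, ⟨ha, hb⟩, rfl⟩ := hv
  obtain ⟨⟨a', b'⟩, ⟨ha', hb'⟩, huv⟩ := hw
  simp only [Prod.mk.injEq] at huv
  exact Prod.ext
    (ZMod.val_injective K (eq_of_natCast_two_mul_add_eq (ZMod.val_lt _) (ZMod.val_lt _) ha' ha
      huv.1).symm)
    (ZMod.val_injective K (eq_of_natCast_two_mul_add_eq (ZMod.val_lt _) (ZMod.val_lt _) hb' hb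
      huv.2).symm)

end TorusBlocks

section Lines

variable {K : ℕ} (x y : ZMod K)

def rowCells (w j : ℕ) : Finset (ZMod K × ZMod K) :=
  (range w).image fun i : ℕ => (x + (i : ZMod K), y + (j : ZMod K))

def colCells (h i : ℕ) : Finset (ZMod K × ZMod K) :=
  (range h).image fun j : ℕ => (x + (i : ZMod K), y + (j : ZMod K))

lemma rowsCovered_iff (S : ZMod K × ZMod K → Prop) (w h : ℕ) :
    rowsCovered K S x y w h ↔ ∀ j ∈ range h, ∃ u ∈ rowCells x y w j, S u := by
  simp [rowsCovered, rowCells]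

lemma colsCovered_iff (S : ZMod K × ZMod K → Prop) (w h : ℕ) :
    colsCovered K S x y w h ↔ ∀ i ∈ range w, ∃ u ∈ colCells x y h i, S u := by
  simp [colsCovered, colCells]

lemma card_rowCells_le (w j : ℕ) : #(rowCells x y w j) ≤ w :=
  card_image_le.trans (card_range w).le

lemma card_colCells_le (h i : ℕ) : #(colCells x y h i) ≤ h :=
  card_image_le.trans (card_range h).le

lemma natCast_injOn_range : Set.InjOn (Nat.cast : ℕ → ZMod K) (range K) := by
  intro a ha b hb hab
  rw [ZMod.natCast_eq_natCast_iff', Nat.mod_eq_of_lt (by simpa using ha),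
    Nat.mod_eq_of_lt (by simpa using hb)] at hab
  exact hab

lemma pairwiseDisjoint_rowCells {h : ℕ} (hh : h ≤ K) (w : ℕ) :
    (range h : Set ℕ).PairwiseDisjoint (rowCells x y w) := by
  intro j hj j' hj' hne
  refine disjoint_left.mpr fun u hu hu' => hne ?_
  simp only [rowCells, mem_image] at hu hu'
  obtain ⟨i, -, rfl⟩ := hu
  obtain ⟨i', -, hu'⟩ := hu'
  have hK : range h ⊆ range K := range_subset_range.mpr hh
  exact natCast_injOn_range (hK hj') (hK hj) (add_left_cancel (congrArg Prod.snd hu')) |>.symm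

lemma pairwiseDisjoint_colCells {w : ℕ} (hw : w ≤ K) (h : ℕ) :
    (range w : Set ℕ).PairwiseDisjoint (colCells x y h) := by
  intro i hi i' hi' hne
  refine disjoint_left.mpr fun u hu hu' => hne ?_
  simp only [colCells, mem_image] at hu hu'
  obtain ⟨j, -, rfl⟩ := hu
  obtain ⟨j', -, hu'⟩ := hu'
  have hK : range w ⊆ range K := range_subset_range.mpr hw
  exact natCast_injOn_range (hK hi') (hK hi) (add_left_cancel (congrArg Prod.fst hu')) |>.symm

end Lines

section Rectangles

def HasBadRectangle (K l : ℕ) (S : ZMod K × ZMod K → Prop) : Prop :=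
  ∃ x y : ZMod K, rowsCovered K S x y (3 * l) l ∨ colsCovered K S x y l (3 * l)

variable {K : ℕ} [NeZero K] {p : ℝ}

lemma seedMeasure_forall_exists_derivedSeed_le (h0 : 0 ≤ p) (h1 : p ≤ 1) {ι : Type*}
    (J : Finset ι) {B : ι → Finset (ZMod K × ZMod K)} (hB : (J : Set ι).PairwiseDisjoint B)
    {c : ℕ} (hc : ∀ j ∈ J, #(B j) ≤ c) :
    seedMeasure (ZMod (2 * K) × ZMod (2 * K)) p
      {f | ∀ j ∈ J, ∃ u ∈ B j, derivedSeed K f u} ≤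
      ENNReal.ofReal ((1 - (1 - p) ^ (4 * c)) ^ #J) := by
  have hset : {f | ∀ j ∈ J, ∃ u ∈ B j, derivedSeed K f u} =
      {f | ∀ j ∈ J, ∃ v ∈ (B j).biUnion (torusBlock K), f v = true} := by
    ext f
    simp only [derivedSeed_iff_exists_mem_torusBlock, mem_biUnion, Set.mem_ofPred_eq]
    exact forall₂_congr fun j _ => ⟨fun ⟨u, hu, v, hv, hf⟩ => ⟨v, ⟨u, hu, hv⟩, hf⟩,
      fun ⟨v, ⟨u, hu, hv⟩, hf⟩ => ⟨u, hu, v, hv, hf⟩⟩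
  rw [hset]
  refine seedMeasure_forall_exists_true_le h0 h1 J ?_ fun j hj => ?_
  · intro i hi j hj hij
    refine (disjoint_biUnion_left _ _ _).mpr fun u hu => (disjoint_biUnion_right _ _ _).mpr
      fun u' hu' => pairwiseDisjoint_torusBlock trivial trivial fun huu' => ?_
    exact disjoint_left.mp (hB hi hj hij) hu (huu' ▸ hu')
  · calc #((B j).biUnion (torusBlock K)) ≤ ∑ u ∈ B j, #(torusBlock K u) := card_biUnion_le
      _ ≤ ∑ u ∈ B j, 4 := sum_le_sum fun u _ => card_torusBlock_le u
      _ = 4 * #(B j) := by rw [sum_const, smul_eq_mul, mul_comm]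
      _ ≤ 4 * c := Nat.mul_le_mul_left 4 (hc j hj)

lemma seedMeasure_rowsCovered_le (h0 : 0 ≤ p) (h1 : p ≤ 1) (x y : ZMod K) (w : ℕ) {h : ℕ}
    (hh : h ≤ K) :
    seedMeasure (ZMod (2 * K) × ZMod (2 * K)) p {f | rowsCovered K (derivedSeed K f) x y w h} ≤
      ENNReal.ofReal ((1 - (1 - p) ^ (4 * w)) ^ h) := by
  simp_rw [rowsCovered_iff]
  simpa using seedMeasure_forall_exists_derivedSeed_le h0 h1 (range h)
    (pairwiseDisjoint_rowCells x y hh w) fun j _ => card_rowCells_le x y w j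

lemma seedMeasure_colsCovered_le (h0 : 0 ≤ p) (h1 : p ≤ 1) (x y : ZMod K) {w : ℕ}
    (hw : w ≤ K) (h : ℕ) :
    seedMeasure (ZMod (2 * K) × ZMod (2 * K)) p {f | colsCovered K (derivedSeed K f) x y w h} ≤
      ENNReal.ofReal ((1 - (1 - p) ^ (4 * h)) ^ w) := by
  simp_rw [colsCovered_iff]
  simpa using seedMeasure_forall_exists_derivedSeed_le h0 h1 (range w)
    (pairwiseDisjoint_colCells x y hw h) fun i _ => card_colCells_le x y h i

lemma seedMeasure_hasBadRectangle_le (h0 : 0 ≤ p) (h1 : p ≤ 1) {l : ℕ} (hl : l ≤ K) :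
    seedMeasure (ZMod (2 * K) × ZMod (2 * K)) p {f | HasBadRectangle K l (derivedSeed K f)} ≤
      2 * K ^ 2 * ENNReal.ofReal ((1 - (1 - p) ^ (12 * l)) ^ l) := by
  set μ := seedMeasure (ZMod (2 * K) × ZMod (2 * K)) p
  set Q := ENNReal.ofReal ((1 - (1 - p) ^ (12 * l)) ^ l)
  have h12 : 4 * (3 * l) = 12 * l := by ring
  calc μ _ = μ (⋃ x, ⋃ y, {f | rowsCovered K (derivedSeed K f) x y (3 * l) l} ∪
        {f | colsCovered K (derivedSeed K f) x y l (3 * l)}) := by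
        congr 1; ext f; simp [HasBadRectangle]
    _ ≤ ∑ x : ZMod K, ∑ y : ZMod K, (Q + Q) := by
        refine (measure_iUnion_fintype_le _ _).trans (sum_le_sum fun x _ =>
          (measure_iUnion_fintype_le _ _).trans (sum_le_sum fun y _ =>
            (measure_union_le _ _).trans (add_le_add ?_ ?_)))
        · simpa [h12] using seedMeasure_rowsCovered_le h0 h1 x y (3 * l) hl
        · simpa [h12] using seedMeasure_colsCovered_le h0 h1 x y hl (3 * l)
    _ = 2 * K ^ 2 * Q := by simp [ZMod.card]; ring

end Rectangles

section Asymptotics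

open Filter Topology Real

lemma exp_neg_mul_div_le_one_sub_pow {p : ℝ} (hp : p < 1) (m : ℕ) :
    exp (-(m * p / (1 - p))) ≤ (1 - p) ^ m := by
  have hq : 0 < 1 - p := by linarith
  have hlog : -(p / (1 - p)) ≤ log (1 - p) := by
    have := one_sub_inv_le_log_of_pos hq
    rwa [show 1 - (1 - p)⁻¹ = -(p / (1 - p)) by field_simp; ring] at this
  calc exp (-(m * p / (1 - p))) = exp (m * -(p / (1 - p))) := by ring_nf
    _ ≤ exp (m * log (1 - p)) := by gcongr
    _ = (1 - p) ^ m := by rw [exp_nat_mul, exp_log hq]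

lemma eventually_one_sub_one_sub_div_pow_floor_le {c r : ℝ} (hc : 0 ≤ c) {m : ℕ}
    (hr : 1 - exp (-(m * c)) < r) :
    ∀ᶠ x in atTop, 1 - (1 - c / x) ^ (m * ⌊x⌋₊) ≤ r := by
  have hlim : Tendsto (fun x => 1 - exp (-(m * c / (1 - c / x)))) atTop
      (𝓝 (1 - exp (-(m * c)))) := by
    have hcx : Tendsto (fun x => c / x) atTop (𝓝 0) := tendsto_const_nhds.div_atTop tendsto_id
    simpa using tendsto_const_nhds.sub ((tendsto_const_nhds.div (tendsto_const_nhds.sub hcx)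
      (by norm_num : (1 : ℝ) - 0 ≠ 0)).neg.rexp)
  filter_upwards [hlim.eventually_lt_const hr, eventually_gt_atTop c, eventually_gt_atTop 0]
    with x hx hxc hx0
  have hp : c / x < 1 := (div_lt_one hx0).mpr hxc
  have hfloor : ((m * ⌊x⌋₊ : ℕ) : ℝ) * (c / x) ≤ m * c := by
    calc ((m * ⌊x⌋₊ : ℕ) : ℝ) * (c / x) = m * (⌊x⌋₊ * (c / x)) := by push_cast; ring
      _ ≤ m * (x * (c / x)) := by gcongr; exact Nat.floor_le hx0.le
      _ = m * c := by field_simp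
  calc 1 - (1 - c / x) ^ (m * ⌊x⌋₊)
      ≤ 1 - exp (-((m * ⌊x⌋₊ : ℕ) * (c / x) / (1 - c / x))) :=
        sub_le_sub_left (exp_neg_mul_div_le_one_sub_pow hp _) 1
    _ ≤ 1 - exp (-(m * c / (1 - c / x))) :=
        sub_le_sub_left (exp_le_exp.mpr (neg_le_neg (by gcongr))) 1
    _ ≤ r := hx.le

lemma tendsto_sq_mul_pow_floor_log {r : ℝ} (hr0 : 0 < r) (hr : r < exp (-2)) :
    Tendsto (fun x : ℝ => x ^ 2 * r ^ ⌊log x⌋₊) atTop (𝓝 0) := by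
  have hr1 : r ≤ 1 := hr.le.trans (exp_le_one_iff.mpr (by norm_num))
  have hlogr : 0 < -(2 + log r) := by
    have := (log_lt_log_iff hr0 (exp_pos _)).mpr hr
    rw [log_exp] at this; linarith
  have hlim : Tendsto (fun x : ℝ => r⁻¹ * x ^ (-(-(2 + log r)))) atTop (𝓝 0) := by
    simpa using (tendsto_rpow_neg_atTop hlogr).const_mul r⁻¹
  refine tendsto_of_tendsto_of_tendsto_of_le_of_le' tendsto_const_nhds hlim
    (Eventually.of_forall fun x => by positivity) ?_
  filter_upwards [eventually_gt_atTop 0] with x hx0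
  have hswap : r ^ log x = x ^ log r := by rw [rpow_def_of_pos hr0, rpow_def_of_pos hx0, mul_comm]
  calc x ^ 2 * r ^ ⌊log x⌋₊ = x ^ (2 : ℝ) * r ^ (⌊log x⌋₊ : ℝ) := by
        rw [rpow_natCast, rpow_two]
    _ ≤ x ^ (2 : ℝ) * r ^ (log x - 1) := mul_le_mul_of_nonneg_left
        (rpow_le_rpow_of_exponent_ge hr0 hr1 (Nat.sub_one_lt_floor _).le) (by positivity)
    _ = r⁻¹ * x ^ (-(-(2 + log r))) := by
        rw [neg_neg, rpow_sub hr0, rpow_one, hswap, rpow_add hx0]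
        ring

lemma log_two_mul_le_self {x : ℝ} (hx : 0 < x) : log (2 * x) ≤ x := by
  rw [log_le_iff_le_exp (by positivity)]
  nlinarith [quadratic_le_exp_of_nonneg hx.le]

lemma tendsto_seedMeasure_hasBadRectangle {c : ℝ} (hc : 0 < c)
    (hcrit : 1 - exp (-(12 * c)) < exp (-2)) :
    Tendsto (fun k : ℕ =>
      seedMeasure (ZMod (2 * (k + 1)) × ZMod (2 * (k + 1))) (c / log ((2 * (k + 1) : ℕ) : ℝ))
        {f | HasBadRectangle (k + 1) ⌊log ((2 * (k + 1) : ℕ) : ℝ)⌋₊ (derivedSeed (k + 1) f)})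
      atTop (𝓝 0) := by
  set n : ℕ → ℝ := fun k => ((2 * (k + 1) : ℕ) : ℝ)
  have hn : Tendsto n atTop atTop :=
    tendsto_atTop_mono (fun k => by simp only [n]; push_cast; linarith) tendsto_natCast_atTop_atTop
  obtain ⟨r, hr1, hr2⟩ := exists_between hcrit
  have hr0 : 0 < r := lt_of_le_of_lt (sub_nonneg.mpr (exp_le_one_iff.mpr (by linarith))) hr1
  have hlim := ENNReal.tendsto_ofReal <|
    ((tendsto_sq_mul_pow_floor_log hr0 hr2).comp hn).const_mul 2
  rw [mul_zero, ENNReal.ofReal_zero] at hlim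
  refine tendsto_of_tendsto_of_tendsto_of_le_of_le' tendsto_const_nhds hlim
    (Eventually.of_forall fun _ => zero_le) ?_
  filter_upwards [(tendsto_log_atTop.comp hn).eventually
    (eventually_one_sub_one_sub_div_pow_floor_le hc.le (m := 12) (by exact_mod_cast hr1)),
    (tendsto_log_atTop.comp hn).eventually (eventually_ge_atTop c)] with k hq hcL
  simp only [Function.comp_apply] at hq hcL ⊢
  set L := log (n k)
  have hL0 : 0 < L := hc.trans_le hcL
  have hp0 : 0 ≤ c / L := div_nonneg hc.le hL0.le
  have hp1 : c / L ≤ 1 := div_le_one_of_le₀ hcL hL0.le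
  have hl : ⌊L⌋₊ ≤ k + 1 := Nat.floor_le_of_le <| by
    simpa [L, n] using log_two_mul_le_self (x := (k + 1 : ℝ)) (by positivity)
  have hq0 : 0 ≤ 1 - (1 - c / L) ^ (12 * ⌊L⌋₊) :=
    sub_nonneg.mpr (pow_le_one₀ (by linarith) (by linarith))
  calc _ ≤ 2 * ((k + 1 : ℕ) : ENNReal) ^ 2 *
          ENNReal.ofReal ((1 - (1 - c / L) ^ (12 * ⌊L⌋₊)) ^ ⌊L⌋₊) :=
        seedMeasure_hasBadRectangle_le hp0 hp1 hl
    _ ≤ 2 * ENNReal.ofReal (n k ^ 2) * ENNReal.ofReal (r ^ ⌊L⌋₊) := by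
        gcongr
        rw [← ENNReal.ofReal_natCast, ← ENNReal.ofReal_pow (by positivity)]
        exact ENNReal.ofReal_le_ofReal (by simp only [n]; gcongr; linarith)
    _ = ENNReal.ofReal (2 * (n k ^ 2 * r ^ ⌊L⌋₊)) := by
        rw [ENNReal.ofReal_mul (by norm_num), ENNReal.ofReal_mul (by positivity), mul_assoc,
          ENNReal.ofReal_ofNat]

end Asymptotics

/-- Let `β` be the root of `ln(1-e^{-12β}) = -2`, `0 < α < β`, and for even `n = 2k` let
`p = (β-α)/ln n`.  Then the probability that the derived grid `(ZMod k) × (ZMod k)`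
contains a bad rectangle of dimensions `3l × l` or `l × 3l` (where `l = ⌊ln n⌋`)
tends to `0` as `n → ∞` over even `n`. -/
theorem no_bad_rectangle_whp (α β : ℝ)
    (hβ : β = (1 / 12) * Real.log (1 / (1 - Real.exp (-2))))
    (hα : 0 < α) (hαβ : α < β) :
    Filter.Tendsto
      (fun k : ℕ =>
        seedMeasure (ZMod (2 * (k + 1)) × ZMod (2 * (k + 1)))
          ((β - α) / Real.log ((2 * (k + 1) : ℕ) : ℝ))
          {f | ∃ x y : ZMod (k + 1),
            rowsCovered (k + 1) (derivedSeed (k + 1) f) x y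
              (3 * ⌊Real.log ((2 * (k + 1) : ℕ) : ℝ)⌋₊) ⌊Real.log ((2 * (k + 1) : ℕ) : ℝ)⌋₊ ∨
            colsCovered (k + 1) (derivedSeed (k + 1) f) x y
              ⌊Real.log ((2 * (k + 1) : ℕ) : ℝ)⌋₊ (3 * ⌊Real.log ((2 * (k + 1) : ℕ) : ℝ)⌋₊)})
      Filter.atTop (nhds 0) := by
  refine tendsto_seedMeasure_hasBadRectangle (sub_pos.mpr hαβ) ?_
  have hβexp : Real.exp (-(12 * β)) = 1 - Real.exp (-2) := by
    have he : 0 < 1 - Real.exp (-2) := sub_pos.mpr (Real.exp_lt_one_iff.mpr (by norm_num))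
    have h12β : 12 * β = -Real.log (1 - Real.exp (-2)) := by
      rw [hβ, one_div (1 - _), Real.log_inv]; ring
    rw [h12β, neg_neg, Real.exp_log he]
  calc 1 - Real.exp (-(12 * (β - α))) < 1 - Real.exp (-(12 * β)) := by
        gcongr; linarith
    _ = Real.exp (-2) := by rw [hβexp]; ring
end

section
/- Let G be the toroidal mesh of size n with seed set S, run under the majority coloring process of threshold 2, and let 1 ≤ w ≤ n−2 and 1 ≤ h ≤ n−2. Suppose that at some time t every vertex of the rectangle R(x,y,w,h) is black (contained in S_t), and that the horizontal line {(x+i, y+h) : 0 ≤ i < w} adjacent to the top side of the rectangle contains at least one vertex of S. Then there is a time t' ≥ t at which every vertex of the enlarged rectangle R(x,y,w,h+1) is black. -/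
/-- The rectangle `R(x,y,w,h)` of the toroidal mesh: vertices `(x+i, y+j)` for
`0 ≤ i < w`, `0 ≤ j < h` (coordinates mod `n`). -/
def rect (n : ℕ) (x y : ZMod n) (w h : ℕ) : Set (ZMod n × ZMod n) :=
  {v | ∃ i j : ℕ, i < w ∧ j < h ∧ v = (x + (i : ZMod n), y + (j : ZMod n))}

lemma colorStep_subset {V : Type*} (G : SimpleGraph V) (S : Set V) : S ⊆ colorStep G S :=
  Set.subset_union_left

lemma iterate_mono' {V : Type*} (G : SimpleGraph V) (S : Set V) {a b : ℕ} (h : a ≤ b) :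
    (colorStep G)^[a] S ⊆ (colorStep G)^[b] S := by
  induction b with
  | zero => simp_all
  | succ b ih =>
    rcases Nat.lt_or_ge a (b+1) with h'|h'
    · rw [Function.iterate_succ_apply']
      exact (ih (by omega)).trans (colorStep_subset _ _)
    · have : a = b + 1 := by omega
      subst this; exact subset_rfl

lemma step_mem {V : Type*} (G : SimpleGraph V) (T : Set V) {v u w : V}
    (hne : u ≠ w) (h1 : G.Adj v u) (h2 : G.Adj v w) (hu : u ∈ T) (hw : w ∈ T) :
    v ∈ colorStep G T := Or.inr ⟨u, w, hne, h1, h2, hu, hw⟩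

lemma torus_adj_r {n : ℕ} (h1 : (1 : ZMod n) ≠ 0) (a b : ZMod n) :
    (torus n).Adj (a, b) (a + 1, b) := by
  refine ⟨?_, Or.inl (Or.inl rfl)⟩
  intro he
  have ha : a = a + 1 := congrArg Prod.fst he
  apply h1
  have := add_left_cancel (a := a) (by simpa using ha : a + 0 = a + 1)
  exact this.symm

lemma torus_adj_u {n : ℕ} (h1 : (1 : ZMod n) ≠ 0) (a b : ZMod n) :
    (torus n).Adj (a, b) (a, b + 1) := by
  refine ⟨?_, Or.inl (Or.inr rfl)⟩
  intro he
  have hb : b = b + 1 := congrArg Prod.snd he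
  apply h1
  have := add_left_cancel (a := b) (by simpa using hb : b + 0 = b + 1)
  exact this.symm

/-- If at time `t` the whole rectangle `R(x,y,w,h)` (with `1 ≤ w,h ≤ n-2`) is black and
the horizontal line of length `w` adjacent to its top side contains a seed, then at some
later time `t' ≥ t` the whole enlarged rectangle `R(x,y,w,h+1)` is black. -/
theorem rectangle_grows (n : ℕ) (S : Set (ZMod n × ZMod n)) (x y : ZMod n) (w h : ℕ)
    (hw1 : 1 ≤ w) (hw2 : w ≤ n - 2) (hh1 : 1 ≤ h) (hh2 : h ≤ n - 2)
    (t : ℕ) (hrect : rect n x y w h ⊆ (colorStep (torus n))^[t] S)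
    (hseed : ∃ i : ℕ, i < w ∧ (x + (i : ZMod n), y + (h : ZMod n)) ∈ S) :
    ∃ t' : ℕ, t ≤ t' ∧ rect n x y w (h + 1) ⊆ (colorStep (torus n))^[t'] S := by
  have hn : 3 ≤ n := by omega
  have h1 : (1 : ZMod n) ≠ 0 := by
    haveI : Fact (1 < n) := ⟨by omega⟩
    exact one_ne_zero
  obtain ⟨i0, hi0w, hs⟩ := hseed
  set f := colorStep (torus n) with hf
  -- casts
  have hcast : ((h - 1 : ℕ) : ZMod n) + 1 = (h : ZMod n) := by
    have : (h - 1) + 1 = h := by omega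
    calc ((h - 1 : ℕ) : ZMod n) + 1 = (((h - 1) + 1 : ℕ) : ZMod n) := by push_cast; ring
    _ = (h : ZMod n) := by rw [this]
  -- the vertex below (x+i, y+h) is in the rectangle
  have hbelow : ∀ i : ℕ, i < w →
      (x + (i : ZMod n), y + ((h - 1 : ℕ) : ZMod n)) ∈ rect n x y w h :=
    fun i hi => ⟨i, h - 1, hi, by omega, rfl⟩
  -- adjacency up from below vertex to line vertex
  have hadj_below : ∀ i : ℕ, (torus n).Adj (x + (i : ZMod n), y + (h : ZMod n))
      (x + (i : ZMod n), y + ((h - 1 : ℕ) : ZMod n)) := by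
    intro i
    have := torus_adj_u h1 (x + (i : ZMod n)) (y + ((h - 1 : ℕ) : ZMod n))
    rw [add_assoc, hcast] at this
    exact this.symm
  have hne_below : ∀ i j : ℕ, (x + (j : ZMod n), y + (h : ZMod n)) ≠
      (x + (i : ZMod n), y + ((h - 1 : ℕ) : ZMod n)) := by
    intro i j he
    have h2 : y + (h : ZMod n) = y + ((h - 1 : ℕ) : ZMod n) := congrArg Prod.snd he
    have h3 : (h : ZMod n) = ((h - 1 : ℕ) : ZMod n) := by
      exact add_left_cancel h2
    apply h1
    have := hcast
    rw [← h3] at this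
    have := add_left_cancel (a := (h : ZMod n)) (by simpa using this.symm : (h:ZMod n) + 0 = (h:ZMod n) + 1)
    exact this.symm
  -- key claim: any vertex of the line eventually blackens
  have key : ∀ i : ℕ, i < w → (x + (i : ZMod n), y + (h : ZMod n)) ∈ f^[t + w] S := by
    -- rightwards
    have right : ∀ d : ℕ, ∀ i : ℕ, i < w → i0 ≤ i → i - i0 ≤ d →
        (x + (i : ZMod n), y + (h : ZMod n)) ∈ f^[t + d] S := by
      intro d
      induction d with
      | zero =>
        intro i hiw hi0 hd
        have : i = i0 := by omega
        subst this
        exact iterate_mono' _ _ (Nat.zero_le _) hs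
      | succ d ih =>
        intro i hiw hi0 hd
        rcases Nat.lt_or_ge (i - i0) (d + 1) with h'|h'
        · exact iterate_mono' _ _ (by omega) (ih i hiw hi0 (by omega))
        · have hi1 : 1 ≤ i := by omega
          have hprev : (x + ((i - 1 : ℕ) : ZMod n), y + (h : ZMod n)) ∈ f^[t + d] S :=
            ih (i - 1) (by omega) (by omega) (by omega)
          have hbel : (x + (i : ZMod n), y + ((h - 1 : ℕ) : ZMod n)) ∈ f^[t + d] S :=
            iterate_mono' _ _ (by omega) (hrect (hbelow i hiw))
          have : t + (d + 1) = (t + d) + 1 := by omega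
          rw [this, Function.iterate_succ_apply']
          refine step_mem _ _ ?_ ?_ (hadj_below i) hprev hbel
          · intro he
            exact hne_below i (i - 1) he
          · have hc : ((i - 1 : ℕ) : ZMod n) + 1 = (i : ZMod n) := by
              have : (i - 1) + 1 = i := by omega
              calc ((i - 1 : ℕ) : ZMod n) + 1 = (((i - 1) + 1 : ℕ) : ZMod n) := by push_cast; ring
              _ = (i : ZMod n) := by rw [this]
            have := torus_adj_r h1 (x + ((i - 1 : ℕ) : ZMod n)) (y + (h : ZMod n))
            rw [add_assoc, hc] at this
            exact this.symm
    -- leftwards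
    have left : ∀ d : ℕ, ∀ i : ℕ, i < w → i ≤ i0 → i0 - i ≤ d →
        (x + (i : ZMod n), y + (h : ZMod n)) ∈ f^[t + d] S := by
      intro d
      induction d with
      | zero =>
        intro i hiw hi0 hd
        have : i = i0 := by omega
        subst this
        exact iterate_mono' _ _ (Nat.zero_le _) hs
      | succ d ih =>
        intro i hiw hi0 hd
        rcases Nat.lt_or_ge (i0 - i) (d + 1) with h'|h'
        · exact iterate_mono' _ _ (by omega) (ih i hiw hi0 (by omega))
        · have hnext : (x + ((i + 1 : ℕ) : ZMod n), y + (h : ZMod n)) ∈ f^[t + d] S :=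
            ih (i + 1) (by omega) (by omega) (by omega)
          have hbel : (x + (i : ZMod n), y + ((h - 1 : ℕ) : ZMod n)) ∈ f^[t + d] S :=
            iterate_mono' _ _ (by omega) (hrect (hbelow i hiw))
          have : t + (d + 1) = (t + d) + 1 := by omega
          rw [this, Function.iterate_succ_apply']
          refine step_mem _ _ ?_ ?_ (hadj_below i) hnext hbel
          · intro he
            exact hne_below i (i + 1) he
          · have hc : (x + (i : ZMod n)) + 1 = x + ((i + 1 : ℕ) : ZMod n) := by
              push_cast; ring
            have := torus_adj_r h1 (x + (i : ZMod n)) (y + (h : ZMod n))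
            rw [hc] at this
            exact this
    intro i hiw
    rcases Nat.lt_or_ge i i0 with h'|h'
    · exact left w i hiw (by omega) (by omega)
    · exact right w i hiw h' (by omega)
  refine ⟨t + w, by omega, ?_⟩
  rintro v ⟨i, j, hi, hj, rfl⟩
  rcases Nat.lt_or_ge j h with h'|h'
  · exact iterate_mono' _ _ (by omega) (hrect ⟨i, j, hi, h', rfl⟩)
  · have : j = h := by omega
    subst this
    exact key i hi
end
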